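/- For any symmetric-parametrization list 𝒫, one has M(𝒫)·M(𝒫⁺) ≤ M((𝒫⁻)⁺) ≤ M((𝒫⁺)⁻); that is, the M-value after a minus transform followed by a plus transform is at least M(𝒫)·M(𝒫⁺) and at most the M-value after a plus transform followed by a minus transform. -/

import Mathlib

open Finset
open scoped Classical

noncomputable section

/-- The value `M(P) = ∑ v, μ v * |θ v|` of a symmetric-parametrization list
`P = ((μ v, θ v))_v`. -/
def Mval {V : Type*} [Fintype V] (μ θ : V → ℝ) : ℝ := ∑ v, μ v * |θ v|

/-- Weights of the minus transform `P⁻`. -/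
def minusμ {V : Type*} (μ : V → ℝ) : V × V → ℝ := fun p => μ p.1 * μ p.2

/-- Parameters of the minus transform `P⁻`. -/
def minusθ {V : Type*} (θ : V → ℝ) : V × V → ℝ := fun p => θ p.1 * θ p.2

/-- The sign `∓ᵤ` : `-1` when `u = 1` (`true`), `+1` when `u = 0` (`false`). -/
def sgn : Bool → ℝ := fun u => if u then -1 else 1

/-- Weights of the plus transform `P⁺`
(when `1 ∓ᵤ θ₀ θ₁ = 0` the formula yields `0`, matching the convention that the
entry is then `(0, 0)`). -/
def plusμ {V : Type*} (μ θ : V → ℝ) : Bool × V × V → ℝ :=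
  fun p => μ p.2.1 * μ p.2.2 * (1 + sgn p.1 * (θ p.2.1 * θ p.2.2)) / 2

/-- Parameters of the plus transform `P⁺`
(division by zero is `0` in Lean, matching the convention that the entry is
`(0, 0)` when `1 ∓ᵤ θ₀ θ₁ = 0`). -/
def plusθ {V : Type*} (θ : V → ℝ) : Bool × V × V → ℝ :=
  fun p => (θ p.2.2 + sgn p.1 * θ p.2.1) / (1 + sgn p.1 * (θ p.2.1 * θ p.2.2))

/-!
For `|s|, |t| ≤ 1` one has `|t ± s| ≤ 1 ± s t`, so the weights of `P⁺` cancel the denominators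
of its parameters and `M(P⁺) = ∑_{v,w} μ_v μ_w max(|θ_v|, |θ_w|)`, the expected maximum of two
independent copies of `|θ|`; moreover `M(P⁻) = M(P)²`. Writing `x = |θ|`, the middle term
`M((P⁻)⁺)` is then the expectation of `max(x_a x_b, x_c x_d)` over four independent indices.
For fixed `a, c`, the bound `max(x_a x_b, x_c x_d) ≤ max(x_a, x_c) max(x_b, x_d)` gives the upper
estimate, and averaging `max(x_a, x_c) (x_b + x_d) ≤ max(x_a x_b, x_c x_d) + max(x_a x_d, x_c x_b)`
over `b, d` (the two terms on the right have the same mean) gives the lower one.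
-/

def pairMax {V : Type*} [Fintype V] (μ x : V → ℝ) : ℝ :=
  ∑ v, ∑ w, μ v * μ w * max (x v) (x w)

lemma abs_add_add_abs_sub_eq_two_mul_max (a b : ℝ) : |a + b| + |a - b| = 2 * max |a| |b| := by
  rcases abs_cases a with ⟨ha, _⟩ | ⟨ha, _⟩ <;> rcases abs_cases b with ⟨hb, _⟩ | ⟨hb, _⟩ <;>
    rcases abs_cases (a + b) with ⟨hab, _⟩ | ⟨hab, _⟩ <;>
    rcases abs_cases (a - b) with ⟨hab', _⟩ | ⟨hab', _⟩ <;>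
    simp only [ha, hb, hab, hab', max_def] <;> split_ifs <;> linarith

lemma abs_add_le_one_add_mul {s t : ℝ} (hs : |s| ≤ 1) (ht : |t| ≤ 1) : |t + s| ≤ 1 + s * t := by
  obtain ⟨hs₁, hs₂⟩ := abs_le.mp hs
  obtain ⟨ht₁, ht₂⟩ := abs_le.mp ht
  -- `1 + s t ∓ (t + s) = (1 ∓ s) (1 ∓ t)`
  rw [abs_le]
  constructor <;> nlinarith [mul_nonneg (sub_nonneg.2 hs₂) (sub_nonneg.2 ht₂),
    mul_nonneg (neg_le_iff_add_nonneg.1 hs₁) (neg_le_iff_add_nonneg.1 ht₁)]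

lemma mul_abs_div_cancel_of_abs_le {a c : ℝ} (h : |a| ≤ c) : c * |a / c| = |a| := by
  rcases (abs_nonneg a |>.trans h).eq_or_lt with hc | hc
  · rw [← hc] at h ⊢
    simp [abs_nonpos_iff.mp h]
  · rw [abs_div, abs_of_pos hc]; field_simp

section Transforms

variable {V : Type*}

lemma plusμ_mul_abs_plusθ (μ θ : V → ℝ) (hθ : ∀ v, |θ v| ≤ 1) (p : Bool × V × V) :
    plusμ μ θ p * |plusθ θ p| = μ p.2.1 * μ p.2.2 * |θ p.2.2 + sgn p.1 * θ p.2.1| / 2 := by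
  obtain ⟨u, a, b⟩ := p
  have hsgn : |sgn u * θ a| ≤ 1 := by cases u <;> simpa [sgn] using hθ a
  have key := mul_abs_div_cancel_of_abs_le (abs_add_le_one_add_mul hsgn (hθ b))
  simp only [plusμ, plusθ, ← mul_assoc] at key ⊢
  rw [mul_div_right_comm, mul_assoc, key]
  ring

lemma Mval_plus [Fintype V] (μ θ : V → ℝ) (hθ : ∀ v, |θ v| ≤ 1) :
    Mval (plusμ μ θ) (plusθ θ) = pairMax μ (|θ ·|) := by
  simp only [Mval, plusμ_mul_abs_plusθ μ θ hθ, Fintype.sum_prod_type, Fintype.sum_bool,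
    ← Finset.sum_add_distrib, pairMax]
  refine Finset.sum_congr rfl fun a _ => Finset.sum_congr rfl fun b _ => ?_
  have := abs_add_add_abs_sub_eq_two_mul_max (θ b) (θ a)
  simp only [sgn, if_true, Bool.false_eq_true, if_false, neg_one_mul, one_mul, ← sub_eq_add_neg,
    max_comm |θ b|] at this ⊢
  linear_combination (μ a * μ b / 2) * this

lemma Mval_minus [Fintype V] (μ θ : V → ℝ) : Mval (minusμ μ) (minusθ θ) = Mval μ θ ^ 2 := by
  simp only [Mval, Fintype.sum_prod_type, sq, Fintype.sum_mul_sum, minusμ, minusθ, abs_mul]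
  refine Finset.sum_congr rfl fun a _ => Finset.sum_congr rfl fun b _ => by ring

end Transforms

section PairMax

variable {V W : Type*} [Fintype V] [Fintype W]

lemma pairMax_prod (μ x : V → ℝ) (ν y : W → ℝ) :
    pairMax (fun p : V × W => μ p.1 * ν p.2) (fun p => x p.1 * y p.2)
      = ∑ a, ∑ c, μ a * μ c * ∑ b, ∑ d, ν b * ν d * max (x a * y b) (x c * y d) := by
  simp only [pairMax, Fintype.sum_prod_type, Finset.mul_sum]
  refine Finset.sum_congr rfl fun a _ => ?_
  rw [Finset.sum_comm]
  refine Finset.sum_congr rfl fun c _ => Finset.sum_congr rfl fun b _ =>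
    Finset.sum_congr rfl fun d _ => by ring

lemma pairMax_mul (μ x : V → ℝ) (C : ℝ) :
    pairMax μ x * C = ∑ a, ∑ c, μ a * μ c * (max (x a) (x c) * C) := by
  simp only [pairMax, Finset.sum_mul]
  refine Finset.sum_congr rfl fun a _ => Finset.sum_congr rfl fun c _ => by ring

lemma max_mul_add_le (p q s t : ℝ) :
    max p q * (s + t) ≤ max (p * s) (q * t) + max (p * t) (q * s) := by
  rcases le_total p q with h | h
  · rw [max_eq_right h]
    linarith [le_max_right (p * s) (q * t), le_max_right (p * t) (q * s)]
  · rw [max_eq_left h]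
    linarith [le_max_left (p * s) (q * t), le_max_left (p * t) (q * s)]

lemma max_mul_sum_le (ν y : W → ℝ) (hν : ∀ w, 0 ≤ ν w) (hsum : ∑ w, ν w = 1) (p q : ℝ) :
    max p q * ∑ w, ν w * y w ≤ ∑ b, ∑ d, ν b * ν d * max (p * y b) (q * y d) := by
  have hswap : ∑ b, ∑ d, ν b * ν d * max (p * y b) (q * y d)
      = ∑ b, ∑ d, ν b * ν d * max (p * y d) (q * y b) := by
    rw [Finset.sum_comm]
    simp only [mul_comm (ν _) (ν _)]
  have hmean : ∑ b, ∑ d, ν b * ν d * (y b + y d) = 2 * ∑ w, ν w * y w :=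
    calc ∑ b, ∑ d, ν b * ν d * (y b + y d)
        = ∑ b, ∑ d, (ν b * y b * ν d + ν b * (ν d * y d)) :=
          Finset.sum_congr rfl fun b _ => Finset.sum_congr rfl fun d _ => by ring
      _ = (∑ w, ν w * y w) * ∑ w, ν w + (∑ w, ν w) * ∑ w, ν w * y w := by
          simp only [Finset.sum_add_distrib, Fintype.sum_mul_sum]
      _ = 2 * ∑ w, ν w * y w := by rw [hsum]; ring
  have hdouble : max p q * (2 * ∑ w, ν w * y w)
      ≤ 2 * ∑ b, ∑ d, ν b * ν d * max (p * y b) (q * y d) :=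
    calc max p q * (2 * ∑ w, ν w * y w)
        = ∑ b, ∑ d, ν b * ν d * (max p q * (y b + y d)) := by
          rw [← hmean, Finset.mul_sum]
          refine Finset.sum_congr rfl fun b _ => ?_
          rw [Finset.mul_sum]
          exact Finset.sum_congr rfl fun d _ => by ring
      _ ≤ ∑ b, ∑ d, ν b * ν d * (max (p * y b) (q * y d) + max (p * y d) (q * y b)) := by
          gcongr with b _ d _
          · exact mul_nonneg (hν b) (hν d)
          · exact max_mul_add_le p q (y b) (y d)
      _ = 2 * ∑ b, ∑ d, ν b * ν d * max (p * y b) (q * y d) := by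
          simp only [mul_add, Finset.sum_add_distrib, ← hswap]
          ring
  linarith

lemma sum_max_le_max_mul_pairMax (ν y : W → ℝ) (hν : ∀ w, 0 ≤ ν w) (hy : ∀ w, 0 ≤ y w)
    {p : ℝ} (hp : 0 ≤ p) (q : ℝ) :
    ∑ b, ∑ d, ν b * ν d * max (p * y b) (q * y d) ≤ max p q * pairMax ν y := by
  simp only [pairMax, Finset.mul_sum]
  refine Finset.sum_le_sum fun b _ => Finset.sum_le_sum fun d _ => ?_
  have hm : max (p * y b) (q * y d) ≤ max p q * max (y b) (y d) :=
    max_le (mul_le_mul (le_max_left _ _) (le_max_left _ _) (hy b) (hp.trans (le_max_left _ _)))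
      (mul_le_mul (le_max_right _ _) (le_max_right _ _) (hy d) (hp.trans (le_max_left _ _)))
  calc ν b * ν d * max (p * y b) (q * y d) ≤ ν b * ν d * (max p q * max (y b) (y d)) :=
        mul_le_mul_of_nonneg_left hm (mul_nonneg (hν b) (hν d))
    _ = _ := by ring

lemma pairMax_mul_sum_le_pairMax_prod (μ x : V → ℝ) (ν y : W → ℝ) (hμ : ∀ v, 0 ≤ μ v)
    (hν : ∀ w, 0 ≤ ν w) (hsum : ∑ w, ν w = 1) :
    pairMax μ x * ∑ w, ν w * y w
      ≤ pairMax (fun p : V × W => μ p.1 * ν p.2) (fun p => x p.1 * y p.2) := by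
  rw [pairMax_mul, pairMax_prod]
  gcongr with a _ c _
  · exact mul_nonneg (hμ a) (hμ c)
  · exact max_mul_sum_le ν y hν hsum (x a) (x c)

lemma pairMax_prod_le_pairMax_mul (μ x : V → ℝ) (ν y : W → ℝ) (hμ : ∀ v, 0 ≤ μ v)
    (hν : ∀ w, 0 ≤ ν w) (hx : ∀ v, 0 ≤ x v) (hy : ∀ w, 0 ≤ y w) :
    pairMax (fun p : V × W => μ p.1 * ν p.2) (fun p => x p.1 * y p.2)
      ≤ pairMax μ x * pairMax ν y := by
  rw [pairMax_mul, pairMax_prod]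
  gcongr with a _ c _
  · exact mul_nonneg (hμ a) (hμ c)
  · exact sum_max_le_max_mul_pairMax ν y hν hy (hx a) (x c)

end PairMax

theorem stmt14 {V : Type*} [Fintype V] (μ θ : V → ℝ)
    (hμ : ∀ v, 0 ≤ μ v) (hsum : ∑ v, μ v = 1) (hθ : ∀ v, θ v ∈ Set.Icc (-1 : ℝ) 1) :
    Mval μ θ * Mval (plusμ μ θ) (plusθ θ)
      ≤ Mval (plusμ (minusμ μ) (minusθ θ)) (plusθ (minusθ θ))
    ∧ Mval (plusμ (minusμ μ) (minusθ θ)) (plusθ (minusθ θ))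
      ≤ Mval (minusμ (plusμ μ θ)) (minusθ (plusθ θ)) := by
  have hθ₁ : ∀ v, |θ v| ≤ 1 := fun v => abs_le.mpr (hθ v)
  have hminusθ₁ : ∀ p, |minusθ θ p| ≤ 1 := fun p => by
    rw [minusθ, abs_mul]; exact mul_le_one₀ (hθ₁ _) (abs_nonneg _) (hθ₁ _)
  rw [Mval_minus, sq, Mval_plus μ θ hθ₁, Mval_plus _ _ hminusθ₁, mul_comm (Mval μ θ), Mval]
  simp only [minusθ, abs_mul]
  exact ⟨pairMax_mul_sum_le_pairMax_prod μ (|θ ·|) μ (|θ ·|) hμ hμ hsum,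
    pairMax_prod_le_pairMax_mul μ (|θ ·|) μ (|θ ·|) hμ hμ (fun v => abs_nonneg (θ v))
      (fun v => abs_nonneg (θ v))⟩
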